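/- arXiv:2409.20448 — 6 statements merged into one kernel-verified Lean document; each statement's English description precedes it below -/
import Mathlib

section
/- Let a be the bilinear form of the unique continuation problem. Suppose u ∈ H¹(Ω) solves the unique continuation problem and (u_ε, λ_ε) ∈ H¹(Ω) × H¹₀(Ω) solves the regularized mixed system: ε⟨u_ε,v⟩ + a(λ_ε,v) + (u_ε,v)_ω = (u,v)_ω for all v ∈ H¹(Ω), and a(u_ε,w) − ⟨λ_ε,w⟩ = a(u,w) for all w ∈ H¹₀(Ω). Then testing the system with (u_ε − u, λ_ε) yields the energy identity ε⟨u_ε,u_ε⟩ + ‖u_ε − u‖²_{L²(ω)} + ⟨λ_ε,λ_ε⟩ = ε⟨u_ε,u⟩, and consequently ‖u_ε‖_{H¹(Ω)} ≤ ‖u‖_{H¹(Ω)}. -/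
open scoped RealInnerProductSpace

/-- Energy identity and H¹-boundedness for the regularized mixed quasi-reversibility
system of the unique continuation problem. `H` plays the role of `H¹(Ω)` with its
inner product `⟪·,·⟫`, `H0` the subspace `H¹₀(Ω)`, `a` the Dirichlet form
`a(u,v) = ∫ ∇u·∇v`, and `bω` the `L²(ω)` inner product `(·,·)_ω`. -/
theorem stmt0 {H : Type*} [NormedAddCommGroup H] [InnerProductSpace ℝ H]
    (H0 : Submodule ℝ H)
    (a bω : H →ₗ[ℝ] H →ₗ[ℝ] ℝ)
    (ha_symm : ∀ x y, a x y = a y x)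
    (hbω_symm : ∀ x y, bω x y = bω y x)
    (hbω_nonneg : ∀ x, 0 ≤ bω x x)
    (ε : ℝ) (hε : 0 < ε)
    (u uε lε : H) (hlε : lε ∈ H0)
    (heq1 : ∀ v : H, ε * ⟪uε, v⟫ + a lε v + bω uε v = bω u v)
    (heq2 : ∀ w ∈ H0, a uε w - ⟪lε, w⟫ = a u w) :
    ε * ⟪uε, uε⟫ + bω (uε - u) (uε - u) + ⟪lε, lε⟫ = ε * ⟪uε, u⟫ ∧
    ‖uε‖ ≤ ‖u‖ := by
  have h1 := heq1 (uε - u)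
  have h2 := heq2 lε hlε
  -- a lε (uε - u) = ⟪lε, lε⟫
  have ha : a lε (uε - u) = ⟪lε, lε⟫ := by
    rw [map_sub, ha_symm lε uε, ha_symm lε u]
    linarith
  have hid : ε * ⟪uε, uε⟫ + bω (uε - u) (uε - u) + ⟪lε, lε⟫ = ε * ⟪uε, u⟫ := by
    have hinner : ⟪uε, uε - u⟫ = ⟪uε, uε⟫ - ⟪uε, u⟫ := inner_sub_right uε uε u
    have hb : bω (uε - u) (uε - u) = bω uε (uε - u) - bω u (uε - u) := by
      simp only [map_sub, LinearMap.sub_apply]; rw [hbω_symm u uε]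
    rw [ha, hinner] at h1
    linarith
  refine ⟨hid, ?_⟩
  have hnn := hbω_nonneg (uε - u)
  have hll : (0:ℝ) ≤ ⟪lε, lε⟫ := real_inner_self_nonneg
  have h3 : ε * ⟪uε, uε⟫ ≤ ε * ⟪uε, u⟫ := by linarith
  have h4 : ⟪uε, uε⟫ ≤ ⟪uε, u⟫ := le_of_mul_le_mul_left h3 hε
  have h5 : ‖uε‖ * ‖uε‖ ≤ ‖uε‖ * ‖u‖ := by
    calc ‖uε‖ * ‖uε‖ = ⟪uε, uε⟫ := (real_inner_self_eq_norm_mul_norm uε).symm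
      _ ≤ ⟪uε, u⟫ := h4
      _ ≤ ‖uε‖ * ‖u‖ := real_inner_le_norm uε u
  rcases eq_or_lt_of_le (norm_nonneg uε) with h | h
  · rw [← h]; exact norm_nonneg u
  · exact le_of_mul_le_mul_left h5 h
end

section
/- Under the same setting as the energy identity for the regularized mixed system, one has the bound ε^{1/2}‖u_ε‖_{H¹(Ω)} + ‖u_ε − u‖_{L²(ω)} + ‖λ_ε‖_{H¹(Ω)} ≤ C ε^{1/2}‖u‖_{H¹(Ω)} for a constant C independent of ε (e.g. C = 3 works). In particular λ_ε → 0 in H¹(Ω) as ε → 0. -/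
open scoped RealInnerProductSpace
open Filter

/-- Quantitative bound for the regularized mixed quasi-reversibility system:
under the energy identity, `ε^{1/2}‖u_ε‖_{H¹} + ‖u_ε − u‖_{L²(ω)} + ‖λ_ε‖_{H¹}
≤ 3 ε^{1/2} ‖u‖_{H¹}`, and in particular `λ_ε → 0` in `H¹` as `ε → 0⁺`.
`H` plays the role of `H¹(Ω)` and `bω` of the `L²(ω)` inner product. -/
theorem stmt1 {H : Type*} [NormedAddCommGroup H] [InnerProductSpace ℝ H]
    (bω : H →ₗ[ℝ] H →ₗ[ℝ] ℝ)
    (hbω_symm : ∀ x y, bω x y = bω y x)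
    (hbω_nonneg : ∀ x, 0 ≤ bω x x)
    (u : H) (uε lε : ℝ → H)
    (henergy : ∀ ε : ℝ, 0 < ε →
      ε * ⟪uε ε, uε ε⟫ + bω (uε ε - u) (uε ε - u) + ⟪lε ε, lε ε⟫ = ε * ⟪uε ε, u⟫) :
    (∀ ε : ℝ, 0 < ε →
      Real.sqrt ε * ‖uε ε‖ + Real.sqrt (bω (uε ε - u) (uε ε - u)) + ‖lε ε‖ ≤
        3 * Real.sqrt ε * ‖u‖) ∧
    Tendsto (fun ε => ‖lε ε‖) (nhdsWithin 0 (Set.Ioi (0:ℝ))) (nhds 0) := by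
  have key : ∀ ε : ℝ, 0 < ε →
      Real.sqrt ε * ‖uε ε‖ ≤ Real.sqrt ε * ‖u‖ ∧
      Real.sqrt (bω (uε ε - u) (uε ε - u)) ≤ Real.sqrt ε * ‖u‖ ∧
      ‖lε ε‖ ≤ Real.sqrt ε * ‖u‖ := by
    intro ε hε
    have hE := henergy ε hε
    rw [real_inner_self_eq_norm_sq, real_inner_self_eq_norm_sq] at hE
    have hinner : ⟪uε ε, u⟫ ≤ ‖uε ε‖ * ‖u‖ := real_inner_le_norm _ _
    have hb := hbω_nonneg (uε ε - u)
    have hl : (0:ℝ) ≤ ‖lε ε‖ ^ 2 := sq_nonneg _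
    have hi2 : ε * ⟪uε ε, u⟫ ≤ ε * (‖uε ε‖ * ‖u‖) :=
      mul_le_mul_of_nonneg_left hinner hε.le
    have huε : ‖uε ε‖ ≤ ‖u‖ := by
      by_contra hc
      push_neg at hc
      have h0 : 0 < ‖uε ε‖ := lt_of_le_of_lt (norm_nonneg u) hc
      nlinarith [mul_pos hε (mul_pos h0 (sub_pos.mpr hc))]
    have hi3 : ε * (‖uε ε‖ * ‖u‖) ≤ ε * ‖u‖ ^ 2 := by
      have h := mul_le_mul_of_nonneg_left
        (mul_le_mul_of_nonneg_right huε (norm_nonneg u)) hε.le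
      nlinarith [h]
    have hbound : ε * ‖uε ε‖ ^ 2 + bω (uε ε - u) (uε ε - u) + ‖lε ε‖ ^ 2 ≤
        ε * ‖u‖ ^ 2 := by linarith
    have hsq : Real.sqrt (ε * ‖u‖ ^ 2) = Real.sqrt ε * ‖u‖ := by
      rw [Real.sqrt_mul hε.le, Real.sqrt_sq (norm_nonneg u)]
    refine ⟨?_, ?_, ?_⟩
    · exact mul_le_mul_of_nonneg_left huε (Real.sqrt_nonneg ε)
    · rw [← hsq]
      apply Real.sqrt_le_sqrt
      nlinarith [norm_nonneg (uε ε), sq_nonneg ‖lε ε‖]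
    · have : ‖lε ε‖ = Real.sqrt (‖lε ε‖ ^ 2) := (Real.sqrt_sq (norm_nonneg _)).symm
      rw [this, ← hsq]
      apply Real.sqrt_le_sqrt
      nlinarith [norm_nonneg (uε ε)]
  constructor
  · intro ε hε
    obtain ⟨h1, h2, h3⟩ := key ε hε
    linarith
  · have hlim : Tendsto (fun ε : ℝ => Real.sqrt ε * ‖u‖)
        (nhdsWithin 0 (Set.Ioi (0:ℝ))) (nhds 0) := by
      have : Tendsto (fun ε : ℝ => Real.sqrt ε * ‖u‖) (nhds 0) (nhds 0) := by
        have := (Real.continuous_sqrt.tendsto 0).mul_const ‖u‖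
        simpa using this
      exact this.mono_left nhdsWithin_le_nhds
    apply squeeze_zero' (Eventually.of_forall fun _ => norm_nonneg _) _ hlim
    filter_upwards [self_mem_nhdsWithin] with ε hε
    exact (key ε hε).2.2
end

section
/- Let A be the bilinear form A[(u,λ),(v,w)] = ε⟨u,v⟩ + a(λ,v) + (u,v)_ω + a(u,w) − γ²⟨λ,w⟩ on a finite-dimensional product inner-product space V_h × W_h, with ε, γ ∈ (0,1), where a is a symmetric bilinear form and ⟨·,·⟩ is an inner product dominating a. Then choosing test function (v,w) = (u, −λ) gives A[(u,λ),(u,−λ)] = ε⟨u,u⟩ + (u,u)_ω + γ²⟨λ,λ⟩, and consequently the inf-sup constant of A with respect to the product L² norm is bounded below by a positive constant times ε, so A induces an invertible linear system. -/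
open scoped RealInnerProductSpace

/-- The mixed bilinear form `A[(u,λ),(v,w)] = ε⟨u,v⟩ + a(λ,v) + (u,v)_ω + a(u,w) − γ²⟨λ,w⟩`
on `V_h × W_h` satisfies, with the test function `(v,w) = (u,−λ)`, the identity
`A[(u,λ),(u,−λ)] = ε⟨u,u⟩ + (u,u)_ω + γ²⟨λ,λ⟩`; consequently the inf-sup constant of `A`
with respect to the product norm is bounded below by a positive constant times `ε`,
and the induced linear system is injective (hence invertible in finite dimensions). -/
theorem stmt5 {E : Type*} [NormedAddCommGroup E] [InnerProductSpace ℝ E]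
    (Vh Wh : Submodule ℝ E) [FiniteDimensional ℝ Vh] [FiniteDimensional ℝ Wh]
    (a bω : E →ₗ[ℝ] E →ₗ[ℝ] ℝ)
    (ha_symm : ∀ x y, a x y = a y x)
    (hbω_symm : ∀ x y, bω x y = bω y x)
    (hbω_nonneg : ∀ x, 0 ≤ bω x x)
    (ε γ : ℝ) (hε : ε ∈ Set.Ioo (0:ℝ) 1) (hγ : γ ∈ Set.Ioo (0:ℝ) 1)
    (A : E → E → E → E → ℝ)
    (hAdef : ∀ u lam v w,
      A u lam v w = ε * ⟪u, v⟫ + a lam v + bω u v + a u w - γ ^ 2 * ⟪lam, w⟫) :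
    (∀ u lam : E, A u lam u (-lam) = ε * ⟪u, u⟫ + bω u u + γ ^ 2 * ⟪lam, lam⟫) ∧
    (∃ c > 0, ∀ u ∈ Vh, ∀ lam ∈ Wh, ∃ v ∈ Vh, ∃ w ∈ Wh,
      Real.sqrt (‖v‖ ^ 2 + ‖w‖ ^ 2) ≤ Real.sqrt (‖u‖ ^ 2 + ‖lam‖ ^ 2) ∧
      c * ε * (‖u‖ ^ 2 + ‖lam‖ ^ 2) ≤ A u lam v w) ∧
    (∀ u ∈ Vh, ∀ lam ∈ Wh, (∀ v ∈ Vh, ∀ w ∈ Wh, A u lam v w = 0) → u = 0 ∧ lam = 0) := by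

  obtain ⟨hε0, hε1⟩ := hε
  obtain ⟨hγ0, hγ1⟩ := hγ
  have key : ∀ u lam : E, A u lam u (-lam)
      = ε * ⟪u, u⟫ + bω u u + γ ^ 2 * ⟪lam, lam⟫ := by
    intro u lam
    rw [hAdef]
    have h1 : a lam u = a u lam := ha_symm lam u
    have h2 : a u (-lam) = -a u lam := by
      simp [map_neg]
    rw [inner_neg_right]
    ring_nf
    rw [h1, h2]
    ring
  refine ⟨key, ?_, ?_⟩
  · refine ⟨min 1 (γ ^ 2 / ε), lt_min one_pos (div_pos (by positivity) hε0), ?_⟩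
    intro u hu lam hlam
    refine ⟨u, hu, -lam, Wh.neg_mem hlam, ?_, ?_⟩
    · simp
    · rw [key u lam]
      have hnn := hbω_nonneg u
      have h1 : min 1 (γ ^ 2 / ε) * ε * ‖u‖ ^ 2 ≤ ε * ⟪u, u⟫ := by
        rw [real_inner_self_eq_norm_sq]
        have : min 1 (γ ^ 2 / ε) * ε ≤ ε := by
          nlinarith [min_le_left 1 (γ ^ 2 / ε)]
        nlinarith [sq_nonneg ‖u‖]
      have h2 : min 1 (γ ^ 2 / ε) * ε * ‖lam‖ ^ 2 ≤ γ ^ 2 * ⟪lam, lam⟫ := by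
        rw [real_inner_self_eq_norm_sq]
        have h : min 1 (γ ^ 2 / ε) * ε ≤ γ ^ 2 := by
          have := min_le_right 1 (γ ^ 2 / ε)
          calc min 1 (γ ^ 2 / ε) * ε ≤ (γ ^ 2 / ε) * ε := by nlinarith
            _ = γ ^ 2 := by field_simp
        nlinarith [sq_nonneg ‖lam‖]
      nlinarith
  · intro u hu lam hlam h0
    have := h0 u hu (-lam) (Wh.neg_mem hlam)
    rw [key u lam] at this
    have hnn := hbω_nonneg u
    have hu2 : ε * ⟪u, u⟫ = 0 ∧ γ ^ 2 * ⟪lam, lam⟫ = 0 := by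
      have i1 : (0:ℝ) ≤ ⟪u, u⟫ := real_inner_self_nonneg
      have i2 : (0:ℝ) ≤ ⟪lam, lam⟫ := real_inner_self_nonneg
      constructor <;> nlinarith
    constructor
    · have : ⟪u, u⟫ = 0 := by
        rcases mul_eq_zero.mp hu2.1 with h | h
        · exact absurd h (ne_of_gt hε0)
        · exact h
      exact inner_self_eq_zero.mp this
    · have : ⟪lam, lam⟫ = 0 := by
        rcases mul_eq_zero.mp hu2.2 with h | h
        · exact absurd h (by positivity)
        · exact h
      exact inner_self_eq_zero.mp this
end

section
/- Under the hypotheses of the triple-norm convergence theorem and with the coupling h = ε^{1/(2s−2)}, the discrete solution satisfies the uniform bound ‖u_h − u‖_{H¹(Ω)} ≤ C‖u‖_{H^s(Ω)} and the residual-norm estimate ‖u_h − u‖_{uc} ≤ C ε^{1/2}‖u‖_{H^s(Ω)}. -/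
/-!
The coupling `h = ε^{1/(2s-2)}` is chosen so that `h^{s-1} = √ε`; the triple-norm bound then reads
`|||(e_h, λ_h)||| ≤ 2C √ε ‖u‖_{H^s}`. Dividing the `H¹` control by `√ε` bounds the discrete error
`u_h - πu` uniformly in `H¹`, while the `uc` control keeps the factor `√ε`. The interpolation error
`πu - u` is of order `h^{s-1} = √ε ≤ 1` in both norms, and the triangle inequality combines the two.
-/

lemma Real.rpow_one_div_two_mul_sub_two_rpow_sub_one {ε s : ℝ} (hε : 0 ≤ ε) (hs : 1 < s) :
    (ε ^ (1 / (2 * s - 2))) ^ (s - 1) = Real.sqrt ε := by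
  rw [← Real.rpow_mul hε, Real.sqrt_eq_rpow]
  have hs' : s - 1 ≠ 0 := by linarith
  congr 1
  rw [show 2 * s - 2 = 2 * (s - 1) by ring]
  field_simp

lemma le_sub_add_sub_of_subadditive {X : Type*} [AddGroup X] {f : X → ℝ}
    (hf : ∀ x y, f (x + y) ≤ f x + f y) (a b c : X) : f (a - c) ≤ f (a - b) + f (b - c) := by
  simpa only [sub_add_sub_cancel] using hf (a - b) (b - c)

/-- Boundedness and residual-norm convergence (Corollary 3.7): with the coupling
`h = ε^{1/(2s−2)}`, the triple-norm estimate `|||(e_h,λ_h)||| ≤ C(h^{s−1}+ε^{1/2})Ms`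
(with `Ms = ‖u‖_{H^s}`), the controls `ε^{1/2}‖v‖_{H¹} ≤ |||(v,w)|||` and
`‖v‖_{uc} ≤ C_{uc}|||(v,w)|||`, and the optimal interpolation bounds yield
`‖u_h − u‖_{H¹(Ω)} ≤ C'‖u‖_{H^s}` and `‖u_h − u‖_{uc} ≤ C' ε^{1/2}‖u‖_{H^s}`. -/
theorem stmt8 {X : Type*} [AddCommGroup X] [Module ℝ X]
    (trinorm : X → X → ℝ) (nH1 nuc : X → ℝ)
    (ε h s C Cuc Cπ Ms : ℝ)
    (hε : ε ∈ Set.Ioo (0:ℝ) 1) (hs : 1 < s)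
    (hC : 0 < C) (hCuc : 0 < Cuc) (hCπ : 0 < Cπ) (hMs : 0 ≤ Ms)
    (hcoupling : h = ε ^ (1 / (2 * s - 2)))
    (u πu uh lamh : X)
    (hT : trinorm (uh - πu) lamh ≤ C * (h ^ (s - 1) + Real.sqrt ε) * Ms)
    (hc1 : ∀ v w, Real.sqrt ε * nH1 v ≤ trinorm v w)
    (hc2 : ∀ v w, nuc v ≤ Cuc * trinorm v w)
    (htri1 : ∀ x y : X, nH1 (x + y) ≤ nH1 x + nH1 y)
    (htri2 : ∀ x y : X, nuc (x + y) ≤ nuc x + nuc y)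
    (hπH1 : nH1 (πu - u) ≤ Cπ * h ^ (s - 1) * Ms)
    (hπuc : nuc (πu - u) ≤ Cπ * h ^ (s - 1) * Ms) :
    ∃ C' > 0, nH1 (uh - u) ≤ C' * Ms ∧ nuc (uh - u) ≤ C' * Real.sqrt ε * Ms := by
  obtain ⟨hε0, hε1⟩ := hε
  have hsqrt_pos : 0 < Real.sqrt ε := Real.sqrt_pos.mpr hε0
  have hsqrt_le_one : Real.sqrt ε ≤ 1 := Real.sqrt_le_one.mpr hε1.le
  have hh : h ^ (s - 1) = Real.sqrt ε := by
    rw [hcoupling, Real.rpow_one_div_two_mul_sub_two_rpow_sub_one hε0.le hs]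
  rw [hh] at hT hπH1 hπuc
  have htrinorm : trinorm (uh - πu) lamh ≤ Real.sqrt ε * (2 * C * Ms) := by linarith
  have hdiscH1 : nH1 (uh - πu) ≤ 2 * C * Ms :=
    le_of_mul_le_mul_left ((hc1 _ _).trans htrinorm) hsqrt_pos
  have hdiscuc : nuc (uh - πu) ≤ Cuc * (Real.sqrt ε * (2 * C * Ms)) :=
    (hc2 _ _).trans (mul_le_mul_of_nonneg_left htrinorm hCuc.le)
  refine ⟨2 * C * (1 + Cuc) + Cπ, by positivity, ?_, ?_⟩
  · calc nH1 (uh - u) ≤ nH1 (uh - πu) + nH1 (πu - u) := le_sub_add_sub_of_subadditive htri1 _ _ _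
      _ ≤ (2 * C * (1 + Cuc) + Cπ) * Ms := by
          nlinarith [mul_nonneg (mul_nonneg hCπ.le (sub_nonneg.mpr hsqrt_le_one)) hMs,
            mul_nonneg (mul_nonneg hC.le hCuc.le) hMs]
  · calc nuc (uh - u) ≤ nuc (uh - πu) + nuc (πu - u) := le_sub_add_sub_of_subadditive htri2 _ _ _
      _ ≤ (2 * C * (1 + Cuc) + Cπ) * Real.sqrt ε * Ms := by
          nlinarith [mul_nonneg (mul_nonneg hC.le hsqrt_pos.le) hMs]
end

section
/- Logarithmic global convergence: suppose there exist C > 0 and τ ∈ (0,1) such that for all v ∈ H¹(Ω) with ‖v‖_{H¹} ≤ E, ‖v‖_{L²(Ω)} ≤ C (E + d(v)) · (log((E + d(v))/d(v)))^{−τ}. If ‖u_h − u‖_{H¹(Ω)} ≤ C₁ M and d(u_h − u) ≤ C₂ ε^{1/2} M with ε ∈ (0, ε₀) for ε₀ small enough, then ‖u_h − u‖_{L²(Ω)} ≤ C₃ (−log ε)^{−τ} M. -/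
/-- Logarithmic global convergence from conditional stability (Theorem 3.8,
global estimate): if `‖v‖_{L²(Ω)} ≤ C (E + d(v)) (log((E + d(v))/d(v)))^{−τ}`
holds whenever `‖v‖_{H¹(Ω)} ≤ E`, then the bounds `‖u_h − u‖_{H¹(Ω)} ≤ C₁ M`
and `d(u_h − u) ≤ C₂ ε^{1/2} M` with `ε ∈ (0, ε₀)`, `ε₀` small enough, imply
`‖u_h − u‖_{L²(Ω)} ≤ C₃ (−log ε)^{−τ} M`.  Here `nL2, nH1, d` stand for
`‖·‖_{L²(Ω)}`, `‖·‖_{H¹(Ω)}` and the data measurement of the problem. -/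
theorem stmt10 {X : Type*} (nL2 nH1 d : X → ℝ)
    (C τ C₁ C₂ : ℝ) (hC : 0 < C) (hτ : τ ∈ Set.Ioo (0:ℝ) 1)
    (hC₁ : 0 < C₁) (hC₂ : 0 < C₂)
    (hd_nonneg : ∀ v, 0 ≤ d v)
    (hstab : ∀ E : ℝ, 0 ≤ E → ∀ v : X, nH1 v ≤ E →
      nL2 v ≤ C * (E + d v) * Real.log ((E + d v) / d v) ^ (-τ)) :
    ∃ ε₀ > 0, ∃ C₃ > 0, ∀ (M ε : ℝ) (e : X), 0 < M → ε ∈ Set.Ioo (0:ℝ) ε₀ →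
      nH1 e ≤ C₁ * M → d e ≤ C₂ * Real.sqrt ε * M →
      nL2 e ≤ C₃ * (-Real.log ε) ^ (-τ) * M := by
  obtain ⟨hτ0, hτ1⟩ := hτ
  set L : ℝ := 4 * |Real.log (C₂ / C₁)| + 1 with hLdef
  have hL1 : 1 ≤ L := by have := abs_nonneg (Real.log (C₂ / C₁)); simp only [hLdef]; linarith
  refine ⟨Real.exp (-L), Real.exp_pos _, C * (C₁ + C₂) * 4 ^ τ, by positivity, ?_⟩
  rintro M ε e hM ⟨hε0, hεU⟩ hH1 hd
  have hlogε : L < -Real.log ε := by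
    have h := Real.log_lt_log hε0 hεU
    rw [Real.log_exp] at h
    linarith
  set A : ℝ := -Real.log ε with hAdef
  have hA : 0 < A := lt_of_lt_of_le (by linarith) hlogε.le
  have hε1 : ε < 1 := lt_trans hεU (Real.exp_lt_one_iff.mpr (by linarith))
  have hsε : 0 < Real.sqrt ε := Real.sqrt_pos.mpr hε0
  have hsε1 : Real.sqrt ε ≤ 1 := Real.sqrt_le_one.mpr hε1.le
  have key := hstab (C₁ * M) (by positivity) e hH1
  rcases (hd_nonneg e).eq_or_lt with hD | hD
  · rw [← hD, div_zero, Real.log_zero, Real.zero_rpow (by linarith)] at key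
    have : (0:ℝ) ≤ C * (C₁ + C₂) * 4 ^ τ * A ^ (-τ) * M := by positivity
    linarith
  · set S : ℝ := C₁ * M + d e with hSdef
    have hS : 0 < S := by positivity
    -- ratio lower bound
    have hratio : C₁ / (C₂ * Real.sqrt ε) ≤ S / d e := by
      have h1 : C₁ * M / (C₂ * Real.sqrt ε * M) ≤ C₁ * M / d e := by
        apply div_le_div_of_nonneg_left (by positivity) hD hd
      have h2 : C₁ * M / (C₂ * Real.sqrt ε * M) = C₁ / (C₂ * Real.sqrt ε) := by
        rw [mul_div_mul_right _ _ hM.ne']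
      have h3 : C₁ * M / d e ≤ S / d e := by
        gcongr
        simp [hSdef]; positivity
      rw [h2] at h1
      linarith
    have hlogS : A / 4 ≤ Real.log (S / d e) := by
      have h1 : Real.log (C₁ / (C₂ * Real.sqrt ε)) ≤ Real.log (S / d e) :=
        Real.log_le_log (by positivity) hratio
      have h2 : Real.log (C₁ / (C₂ * Real.sqrt ε))
          = Real.log C₁ - Real.log C₂ - Real.log ε / 2 := by
        rw [Real.log_div hC₁.ne' (by positivity), Real.log_mul hC₂.ne' hsε.ne',
          Real.log_sqrt hε0.le]
        ring
      have h3 : Real.log (C₂ / C₁) = Real.log C₂ - Real.log C₁ :=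
        Real.log_div hC₂.ne' hC₁.ne'
      have h4 : Real.log C₂ - Real.log C₁ ≤ |Real.log (C₂ / C₁)| := by
        rw [h3]; exact le_abs_self _
      have h5 : 4 * |Real.log (C₂ / C₁)| + 1 < A := hlogε
      rw [h2] at h1
      have : A / 4 ≤ Real.log C₁ - Real.log C₂ - Real.log ε / 2 := by
        have : Real.log ε = -A := by simp [hAdef]
        rw [this]; linarith
      linarith
    have hApos4 : (0:ℝ) < A / 4 := by linarith
    have hrpow : Real.log (S / d e) ^ (-τ) ≤ A ^ (-τ) * 4 ^ τ := by
      have h1 : Real.log (S / d e) ^ (-τ) ≤ (A / 4) ^ (-τ) :=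
        Real.rpow_le_rpow_of_nonpos hApos4 hlogS (by linarith)
      have h2 : (A / 4 : ℝ) ^ (-τ) = A ^ (-τ) * 4 ^ τ := by
        rw [Real.div_rpow hA.le (by norm_num), Real.rpow_neg (by norm_num : (0:ℝ) ≤ 4)]
        field_simp
      linarith [h2 ▸ h1]
    have hSle : S ≤ (C₁ + C₂) * M := by
      have : d e ≤ C₂ * M := by
        calc d e ≤ C₂ * Real.sqrt ε * M := hd
          _ ≤ C₂ * 1 * M := by
              apply mul_le_mul_of_nonneg_right _ hM.le
              exact mul_le_mul_of_nonneg_left hsε1 hC₂.le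
          _ = C₂ * M := by ring
      simp only [hSdef]; linarith [this]
    calc nL2 e ≤ C * S * Real.log (S / d e) ^ (-τ) := key
      _ ≤ C * ((C₁ + C₂) * M) * (A ^ (-τ) * 4 ^ τ) := by
          apply mul_le_mul _ hrpow (Real.rpow_nonneg ?_ _) (by positivity)
          · exact mul_le_mul_of_nonneg_left hSle hC.le
          · exact le_trans hApos4.le hlogS
      _ = C * (C₁ + C₂) * 4 ^ τ * A ^ (-τ) * M := by ring
end

section
/- Abstract inf-sup from a stabilizing test function: let A[(u,λ),(v,w)] = ε⟨u,v⟩ + a(λ,v) + (u,v)_ω + a(u,w) − γ²⟨λ,w⟩ on V_h × W_h. Suppose for each u_h ∈ V_h there exists w_h ∈ W_h with ‖w_h‖²_{H¹} ≤ C₀ S(u_h) and a(u_h, w_h) ≥ S(u_h), where S(u_h) := J_h(u_h,u_h) + ‖hΔ_h u_h‖². If 3C₀γ² ≤ 1/2, then A[(u_h,λ_h),(u_h, −λ_h + w_h)] ≥ ½ |||(u_h,λ_h)|||², where |||(u_h,λ_h)|||² = ε‖u_h‖²_{H¹} + ‖u_h‖²_ω + S(u_h) + γ²‖λ_h‖²_{H¹};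 in particular the inf-sup condition for A in the triple norm holds with a constant independent of ε, γ, h. -/
open scoped RealInnerProductSpace

/-- Abstract inf-sup from a stabilizing test function (Theorem 4.6): let
`A[(u,λ),(v,w)] = ε⟨u,v⟩ + a(λ,v) + (u,v)_ω + a(u,w) − γ²⟨λ,w⟩` on `V_h × W_h`,
`S(u) = J_h(u,u) + ‖hΔ_h u‖²`, and `|||(u,λ)|||² = ε‖u‖²_{H¹} + ‖u‖²_ω + S(u)
+ γ²‖λ‖²_{H¹}`.  If for each `u ∈ V_h` there is `w ∈ W_h` with
`‖w‖² ≤ C₀ S(u)` and `a(u,w) ≥ S(u)`, and if `3C₀γ² ≤ 1/2`, then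
`A[(u,λ),(u, −λ + w)] ≥ ½ |||(u,λ)|||²` and the triple norm of the test pair is
controlled by that of `(u,λ)`, uniformly in `ε, γ, h`. -/
theorem stmt15 {E : Type*} [NormedAddCommGroup E] [InnerProductSpace ℝ E]
    (Vh Wh : Submodule ℝ E)
    (a bω : E →ₗ[ℝ] E →ₗ[ℝ] ℝ)
    (ha_symm : ∀ x y, a x y = a y x)
    (hbω_nonneg : ∀ x, 0 ≤ bω x x)
    (S : E → ℝ) (hS_nonneg : ∀ x, 0 ≤ S x)
    (ε γ C₀ : ℝ) (hε : 0 < ε) (hγ : 0 < γ) (hC₀ : 0 < C₀)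
    (hsmall : 3 * C₀ * γ ^ 2 ≤ 1 / 2)
    (A : E → E → E → E → ℝ)
    (hAdef : ∀ u l v w,
      A u l v w = ε * ⟪u, v⟫ + a l v + bω u v + a u w - γ ^ 2 * ⟪l, w⟫)
    (trin : E → E → ℝ)
    (htrin : ∀ u l, trin u l = ε * ‖u‖ ^ 2 + bω u u + S u + γ ^ 2 * ‖l‖ ^ 2)
    (hstab : ∀ u ∈ Vh, ∃ w ∈ Wh, ‖w‖ ^ 2 ≤ C₀ * S u ∧ S u ≤ a u w) :
    ∃ Cstar > 0, ∀ u ∈ Vh, ∀ l ∈ Wh, ∃ w ∈ Wh,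
      A u l u (-l + w) ≥ (1 / 2) * trin u l ∧
      trin u (-l + w) ≤ Cstar * trin u l := by
  refine ⟨2, by norm_num, ?_⟩
  intro u hu l hl
  obtain ⟨w, hw, hwb, hSw⟩ := hstab u hu
  have hγ2 : (0:ℝ) ≤ γ ^ 2 := sq_nonneg γ
  have hSu := hS_nonneg u
  have hbu := hbω_nonneg u
  have heu : 0 ≤ ε * ‖u‖ ^ 2 := mul_nonneg hε.le (sq_nonneg ‖u‖)
  have h7 : γ ^ 2 * C₀ ≤ 1 / 6 := by nlinarith
  have h6 : γ ^ 2 * ‖w‖ ^ 2 ≤ γ ^ 2 * (C₀ * S u) := by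
    exact mul_le_mul_of_nonneg_left hwb hγ2
  have h8 : γ ^ 2 * (C₀ * S u) ≤ (1/6) * S u := by nlinarith
  refine ⟨w, hw, ?_, ?_⟩
  · rw [hAdef, htrin]
    have h1 : ⟪l, -l + w⟫ = -‖l‖ ^ 2 + ⟪l, w⟫ := by
      rw [inner_add_right, inner_neg_right, real_inner_self_eq_norm_sq]
    have h2 : a u (-l + w) = -(a u l) + a u w := by simp
    have h3 : a l u = a u l := ha_symm l u
    have h4 : ⟪l, w⟫ ≤ ‖l‖ * ‖w‖ := real_inner_le_norm l w
    have h5 : ‖l‖ * ‖w‖ ≤ (1/4) * ‖l‖ ^ 2 + ‖w‖ ^ 2 := by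
      nlinarith [sq_nonneg (‖l‖ - 2 * ‖w‖)]
    have h9 : γ ^ 2 * ⟪l, w⟫ ≤ γ ^ 2 * ((1/4) * ‖l‖ ^ 2 + ‖w‖ ^ 2) :=
      mul_le_mul_of_nonneg_left (h4.trans h5) hγ2
    rw [h1, h2, h3, real_inner_self_eq_norm_sq]
    have hl2 : 0 ≤ γ ^ 2 * ‖l‖ ^ 2 := mul_nonneg hγ2 (sq_nonneg ‖l‖)
    nlinarith
  · rw [htrin, htrin]
    have hn : ‖-l + w‖ ≤ ‖l‖ + ‖w‖ := by
      calc ‖-l + w‖ ≤ ‖-l‖ + ‖w‖ := norm_add_le _ _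
        _ = ‖l‖ + ‖w‖ := by rw [norm_neg]
    have h10 : ‖-l + w‖ ^ 2 ≤ 2 * ‖l‖ ^ 2 + 2 * ‖w‖ ^ 2 := by
      nlinarith [mul_self_le_mul_self (norm_nonneg (-l + w)) hn, sq_nonneg (‖l‖ - ‖w‖)]
    have h11 : γ ^ 2 * ‖-l + w‖ ^ 2 ≤ γ ^ 2 * (2 * ‖l‖ ^ 2 + 2 * ‖w‖ ^ 2) :=
      mul_le_mul_of_nonneg_left h10 hγ2
    have hl2 : 0 ≤ γ ^ 2 * ‖l‖ ^ 2 := mul_nonneg hγ2 (sq_nonneg ‖l‖)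
    nlinarith
end
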